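/- If 𝔥 is a fat Hoffman graph (with at least one slim vertex) whose smallest eigenvalue satisfies λ_min(𝔥) > −3, then the smallest eigenvalue of its special graph satisfies λ_min(S(𝔥)) ≥ λ_min(𝔥) + 1. -/

import Mathlib

/-! Two distinct slim vertices `x ≠ y` sharing two fat neighbours would give
`(1_x + 1_y)ᵀ B (1_x + 1_y) ≤ -2 - 2 - 1 - 1 = -6`, forcing `λ_min(𝔥) ≤ -3`. So when
`λ_min(𝔥) > -3` distinct slim vertices share at most one fat neighbour, and then `B(𝔥)` and
`M(S(𝔥))` agree off the diagonal: `M(S(𝔥)) = B(𝔥) + D` with `D` the diagonal of fat degrees,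
all `≥ 1` as `𝔥` is fat. Since `B(𝔥) - λ_min(𝔥) I` and `D - I` are positive semidefinite, so is
`M(S(𝔥)) - (λ_min(𝔥) + 1) I`. -/

/-- A Hoffman graph: a finite simple graph whose vertices are labeled slim or fat,
such that fat vertices are pairwise non-adjacent and every fat vertex is adjacent
to at least one slim vertex. -/
structure HoffmanGraph (V : Type*) where
  adj : V → V → Prop
  symm : ∀ {x y : V}, adj x y → adj y x
  loopless : ∀ x : V, ¬ adj x x
  fat : V → Prop
  fat_slim : ∀ x : V, fat x → ∃ y : V, adj x y ∧ ¬ fat y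
  fat_nonadj : ∀ x y : V, fat x → fat y → ¬ adj x y

/-- The smallest eigenvalue of a real matrix (the infimum of its set of real
eigenvalues); for a real symmetric matrix on a nonempty finite index type this is
the least eigenvalue. -/
noncomputable def minEig {n : Type*} [Fintype n] (M : Matrix n n ℝ) : ℝ :=
  sInf {t : ℝ | ∃ v : n → ℝ, v ≠ 0 ∧ M.mulVec v = t • v}

namespace HoffmanGraph

variable {V : Type*}

/-- The type of slim vertices. -/
abbrev Slim (H : HoffmanGraph V) : Type _ := {x : V // ¬ H.fat x}

/-- The type of fat vertices. -/
abbrev FatV (H : HoffmanGraph V) : Type _ := {x : V // H.fat x}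

noncomputable instance (priority := 50) instFintypeSlim [Finite V] {H : HoffmanGraph V} :
    Fintype H.Slim := Fintype.ofFinite _

noncomputable instance (priority := 50) instFintypeFatV [Finite V] {H : HoffmanGraph V} :
    Fintype H.FatV := Fintype.ofFinite _

/-- The set of fat neighbors `N^f(x)` of a vertex. -/
def fatNbrs (H : HoffmanGraph V) (x : V) : Set V := {f | H.fat f ∧ H.adj x f}

/-- The set of common fat neighbors `N^f(x) ∩ N^f(y)` of two vertices. -/
def commonFat (H : HoffmanGraph V) (x y : V) : Set V :=
  {f | H.fat f ∧ H.adj x f ∧ H.adj y f}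

lemma commonFat_comm (H : HoffmanGraph V) (x y : V) :
    H.commonFat x y = H.commonFat y x := by
  ext f; simp only [commonFat, Set.mem_setOf_eq]; tauto

/-- The degree of a vertex. -/
noncomputable def degree (H : HoffmanGraph V) (x : V) : ℕ := {y | H.adj x y}.ncard

/-- The matrix `B(𝔥) = A_s - C Cᵀ`, written entrywise:
`B x y = A_s x y - |N^f(x) ∩ N^f(y)|`. -/
noncomputable def B (H : HoffmanGraph V) : Matrix H.Slim H.Slim ℝ := by
  classical
  exact Matrix.of fun x y =>
    (if H.adj x.1 y.1 then (1 : ℝ) else 0) - ((H.commonFat x.1 y.1).ncard : ℝ)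

/-- `λ_min(𝔥)`: the smallest eigenvalue of `B(𝔥)`. -/
noncomputable def lamMin [Finite V] (H : HoffmanGraph V) : ℝ := minEig H.B

/-- The adjacency matrix of the slim subgraph of `𝔥` (equivalently, the `B`-matrix
of the slim subgraph regarded as a slim Hoffman graph). -/
noncomputable def slimAdjMatrix (H : HoffmanGraph V) : Matrix H.Slim H.Slim ℝ := by
  classical
  exact Matrix.of fun x y => if H.adj x.1 y.1 then (1 : ℝ) else 0

/-- A Hoffman graph is fat if every slim vertex has a fat neighbor. -/
def IsFat (H : HoffmanGraph V) : Prop :=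
  ∀ x : V, ¬ H.fat x → ∃ f : V, H.fat f ∧ H.adj x f

end HoffmanGraph

/-- An embedding exhibiting `G` as an induced Hoffman subgraph of `H`:
an injection preserving adjacency, non-adjacency, and the slim/fat labeling. -/
structure HoffmanEmbedding {V W : Type*} (G : HoffmanGraph V) (H : HoffmanGraph W) where
  toFun : V → W
  inj : Function.Injective toFun
  adj_iff : ∀ x y : V, G.adj x y ↔ H.adj (toFun x) (toFun y)
  fat_iff : ∀ x : V, G.fat x ↔ H.fat (toFun x)

/-- An isomorphism of Hoffman graphs. -/
structure HoffmanIso {V W : Type*} (G : HoffmanGraph V) (H : HoffmanGraph W) where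
  toEquiv : V ≃ W
  adj_iff : ∀ x y : V, G.adj x y ↔ H.adj (toEquiv x) (toEquiv y)
  fat_iff : ∀ x : V, G.fat x ↔ H.fat (toEquiv x)

namespace HoffmanGraph

variable {V : Type*}

/-- The induced Hoffman subgraph on a set `W` of vertices, provided every fat
vertex of `W` keeps a slim neighbor inside `W`. -/
def induce (H : HoffmanGraph V) (W : Finset V)
    (hW : ∀ y ∈ W, H.fat y → ∃ x ∈ W, ¬ H.fat x ∧ H.adj y x) :
    HoffmanGraph {v : V // v ∈ W} where
  adj x y := H.adj x.1 y.1
  symm := @fun x y h => H.symm h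
  loopless x h := H.loopless x.1 h
  fat x := H.fat x.1
  fat_slim x hx := by
    obtain ⟨z, hzW, hz1, hz2⟩ := hW x.1 x.2 hx
    exact ⟨⟨z, hzW⟩, hz2, hz1⟩
  fat_nonadj x y hx hy := H.fat_nonadj x.1 y.1 hx hy

/-- A decomposition of a Hoffman graph `H` into the family of induced Hoffman
subgraphs on the (nonempty) vertex sets `W i`. -/
structure IsDecomposition (H : HoffmanGraph V) {ι : Type*} (W : ι → Finset V) : Prop where
  nonempty : ∀ i, (W i).Nonempty
  cover : ∀ v : V, ∃ i, v ∈ W i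
  slim_disj : ∀ i j, i ≠ j → ∀ x : V, ¬ H.fat x → x ∈ W i → x ∈ W j → False
  fat_closed : ∀ i, ∀ x y : V, x ∈ W i → ¬ H.fat x → H.fat y → H.adj x y → y ∈ W i
  part_fat : ∀ i, ∀ y ∈ W i, H.fat y → ∃ x ∈ W i, ¬ H.fat x ∧ H.adj y x
  cross : ∀ i j, i ≠ j → ∀ x y : V, x ∈ W i → y ∈ W j → ¬ H.fat x → ¬ H.fat y →
    (H.commonFat x y).ncard ≤ 1 ∧ ((H.commonFat x y).ncard = 1 ↔ H.adj x y)

/-- A Hoffman graph is decomposable if it admits a decomposition into `n ≥ 2` parts. -/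
def Decomposable (H : HoffmanGraph V) : Prop :=
  ∃ n : ℕ, 2 ≤ n ∧ ∃ W : Fin n → Finset V, H.IsDecomposition W

/-- `α`-reducibility: `λ_min(H) ≥ α` and there is a Hoffman graph `H'` containing `H`
as an induced Hoffman subgraph together with a decomposition `{𝔥¹, 𝔥²}` of `H'` whose
parts have smallest eigenvalue at least `α` and whose slim vertex sets both meet the
slim vertex set of `H`. -/
def AlphaReducible [Finite V] (H : HoffmanGraph V) (α : ℝ) : Prop :=
  H.lamMin ≥ α ∧
  ∃ (V' : Type) (_ : Finite V') (H' : HoffmanGraph V') (e : HoffmanEmbedding H H')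
    (W : Fin 2 → Finset V') (hD : H'.IsDecomposition W),
    (∀ i, (H'.induce (W i) (hD.part_fat i)).lamMin ≥ α) ∧
    (∀ i, ∃ v : V, ¬ H.fat v ∧ e.toFun v ∈ W i)

/-- `α`-irreducibility: `λ_min(H) ≥ α` and `H` is not `α`-reducible. -/
def AlphaIrreducible [Finite V] (H : HoffmanGraph V) (α : ℝ) : Prop :=
  H.lamMin ≥ α ∧ ¬ H.AlphaReducible α

end HoffmanGraph

/-- An edge-signed graph: a simple graph whose edge set is partitioned into
`(+)`-edges and `(−)`-edges. -/
structure EdgeSignedGraph (V : Type*) where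
  pos : V → V → Prop
  neg : V → V → Prop
  pos_symm : ∀ {x y : V}, pos x y → pos y x
  neg_symm : ∀ {x y : V}, neg x y → neg y x
  pos_irrefl : ∀ x : V, ¬ pos x x
  neg_irrefl : ∀ x : V, ¬ neg x x
  pos_neg : ∀ x y : V, pos x y → neg x y → False

namespace EdgeSignedGraph

variable {V : Type*}

/-- The signed adjacency matrix: `1` on `(+)`-edges, `−1` on `(−)`-edges, `0` otherwise. -/
noncomputable def M (S : EdgeSignedGraph V) : Matrix V V ℝ := by
  classical
  exact Matrix.of fun x y => if S.pos x y then (1 : ℝ) else if S.neg x y then -1 else 0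

/-- The underlying simple graph of an edge-signed graph. -/
def toSimpleGraph (S : EdgeSignedGraph V) : SimpleGraph V where
  Adj x y := S.pos x y ∨ S.neg x y
  symm := ⟨fun x y h => h.elim (fun h => Or.inl (S.pos_symm h)) (fun h => Or.inr (S.neg_symm h))⟩
  loopless := ⟨fun x h => h.elim (S.pos_irrefl x) (S.neg_irrefl x)⟩

/-- `S.HasInduced T`: the edge-signed graph `S` contains an induced edge-signed
subgraph isomorphic to `T`. -/
def HasInduced {W : Type*} (S : EdgeSignedGraph V) (T : EdgeSignedGraph W) : Prop :=
  ∃ f : W → V, Function.Injective f ∧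
    (∀ x y : W, T.pos x y ↔ S.pos (f x) (f y)) ∧
    (∀ x y : W, T.neg x y ↔ S.neg (f x) (f y))

end EdgeSignedGraph

/-- An isomorphism of edge-signed graphs. -/
structure EdgeSignedIso {V W : Type*} (S : EdgeSignedGraph V) (T : EdgeSignedGraph W) where
  toEquiv : V ≃ W
  pos_iff : ∀ x y : V, S.pos x y ↔ T.pos (toEquiv x) (toEquiv y)
  neg_iff : ∀ x y : V, S.neg x y ↔ T.neg (toEquiv x) (toEquiv y)

/-- The special graph `S(𝔥)` of a Hoffman graph: the edge-signed graph on the slim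
vertices where adjacent vertices with no common fat neighbor form a `(+)`-edge, and
non-adjacent vertices with a common fat neighbor form a `(−)`-edge. -/
def HoffmanGraph.special {V : Type*} (H : HoffmanGraph V) : EdgeSignedGraph H.Slim where
  pos x y := H.adj x.1 y.1 ∧ H.commonFat x.1 y.1 = ∅
  neg x y := x ≠ y ∧ ¬ H.adj x.1 y.1 ∧ (H.commonFat x.1 y.1).Nonempty
  pos_symm := @fun x y h => ⟨H.symm h.1, by rw [H.commonFat_comm]; exact h.2⟩
  neg_symm := @fun x y h =>
    ⟨h.1.symm, fun ha => h.2.1 (H.symm ha), by rw [H.commonFat_comm]; exact h.2.2⟩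
  pos_irrefl x h := H.loopless x.1 h.1
  neg_irrefl x h := h.1 rfl
  pos_neg x y hp hn := hn.2.1 hp.1

/-- The edge-signed graph `Q_{p,q,r}`: a `(+)`-clique `V_r = Fin r`, a set
`V_p = Fin p` matched by `(+)`-edges to the first `p` vertices of `V_r`, and a set
`V_q = Fin q` matched by `(−)`-edges to the next `q` vertices of `V_r`. -/
def Q (p q r : ℕ) : EdgeSignedGraph (Fin p ⊕ Fin q ⊕ Fin r) where
  pos x y :=
    (∃ (i : Fin p) (k : Fin r), x = Sum.inl i ∧ y = Sum.inr (Sum.inr k) ∧ (k : ℕ) = (i : ℕ)) ∨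
    (∃ (i : Fin p) (k : Fin r), y = Sum.inl i ∧ x = Sum.inr (Sum.inr k) ∧ (k : ℕ) = (i : ℕ)) ∨
    (∃ (k l : Fin r), x = Sum.inr (Sum.inr k) ∧ y = Sum.inr (Sum.inr l) ∧ k ≠ l)
  neg x y :=
    (∃ (j : Fin q) (k : Fin r),
      x = Sum.inr (Sum.inl j) ∧ y = Sum.inr (Sum.inr k) ∧ (k : ℕ) = p + (j : ℕ)) ∨
    (∃ (j : Fin q) (k : Fin r),
      y = Sum.inr (Sum.inl j) ∧ x = Sum.inr (Sum.inr k) ∧ (k : ℕ) = p + (j : ℕ))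
  pos_symm := @fun x y h => by
    rcases h with ⟨i, k, h1, h2, h3⟩ | ⟨i, k, h1, h2, h3⟩ | ⟨k, l, h1, h2, h3⟩
    · exact Or.inr (Or.inl ⟨i, k, h1, h2, h3⟩)
    · exact Or.inl ⟨i, k, h1, h2, h3⟩
    · exact Or.inr (Or.inr ⟨l, k, h2, h1, h3.symm⟩)
  neg_symm := @fun x y h => by
    rcases h with ⟨j, k, h1, h2, h3⟩ | ⟨j, k, h1, h2, h3⟩
    · exact Or.inr ⟨j, k, h1, h2, h3⟩
    · exact Or.inl ⟨j, k, h1, h2, h3⟩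
  pos_irrefl x h := by
    rcases h with ⟨i, k, h1, h2, h3⟩ | ⟨i, k, h1, h2, h3⟩ | ⟨k, l, h1, h2, h3⟩ <;>
      subst h1 <;> simp_all
  neg_irrefl x h := by
    rcases h with ⟨j, k, h1, h2, h3⟩ | ⟨j, k, h1, h2, h3⟩ <;> subst h1 <;> simp_all
  pos_neg x y hp hn := by
    rcases hp with ⟨i, k, h1, h2, h3⟩ | ⟨i, k, h1, h2, h3⟩ | ⟨k, l, h1, h2, h3⟩ <;>
      rcases hn with ⟨j, m, g1, g2, g3⟩ | ⟨j, m, g1, g2, g3⟩ <;> subst h1 <;> simp_all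

/-- The edge-signed triangle `T₁` with exactly one `(+)`-edge and two `(−)`-edges. -/
def T1 : EdgeSignedGraph (Fin 3) where
  pos x y := (x = 0 ∧ y = 1) ∨ (x = 1 ∧ y = 0)
  neg x y := x ≠ y ∧ (x = 2 ∨ y = 2)
  pos_symm := @fun x y h => by tauto
  neg_symm := @fun x y h => ⟨h.1.symm, h.2.symm⟩
  pos_irrefl x h := by
    rcases h with ⟨h1, h2⟩ | ⟨h1, h2⟩ <;> subst h1 <;> exact absurd h2 (by decide)
  neg_irrefl x h := h.1 rfl
  pos_neg x y hp hn := by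
    rcases hp with ⟨h1, h2⟩ | ⟨h1, h2⟩ <;> subst h1 <;> subst h2 <;>
      exact absurd hn.2 (by decide)

/-- The golden ratio `τ = (1 + √5)/2`. -/
noncomputable def goldenRatio' : ℝ := (1 + Real.sqrt 5) / 2

namespace Matrix

variable {n : Type*} [Fintype n]

theorem setOf_mulVec_eq_smul_eq_spectrum [DecidableEq n] {K : Type*} [Field K]
    (A : Matrix n n K) :
    {t : K | ∃ v : n → K, v ≠ 0 ∧ A *ᵥ v = t • v} = spectrum K A := by
  ext t
  rw [Set.mem_ofPred_eq, ← spectrum_toLin', ← Module.End.hasEigenvalue_iff_mem_spectrum]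
  constructor
  · rintro ⟨v, hv, hAv⟩
    exact Module.End.hasEigenvalue_of_hasEigenvector ⟨Module.End.mem_eigenspace_iff.mpr hAv, hv⟩
  · intro ht
    obtain ⟨v, hv⟩ := ht.exists_hasEigenvector
    exact ⟨v, hv.2, Module.End.mem_eigenspace_iff.mp hv.1⟩

theorem minEig_eq_sInf_spectrum [DecidableEq n] (A : Matrix n n ℝ) :
    minEig A = sInf (spectrum ℝ A) := by
  rw [minEig, setOf_mulVec_eq_smul_eq_spectrum]

theorem single_add_single_dotProduct_mulVec_single_add_single [DecidableEq n] {R : Type*}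
    [CommSemiring R] (A : Matrix n n R) (x y : n) :
    (Pi.single x 1 + Pi.single y 1) ⬝ᵥ A *ᵥ (Pi.single x 1 + Pi.single y 1)
      = A x x + A x y + A y x + A y y := by
  simp only [mulVec_add, mulVec_single, MulOpposite.op_one, one_smul, dotProduct_add,
    add_dotProduct, single_dotProduct, col_apply, one_mul]
  ring

namespace IsHermitian

variable {A : Matrix n n ℝ}

theorem posSemidef_sub_smul_one_iff [DecidableEq n] (hA : A.IsHermitian) (μ : ℝ) :
    (A - μ • 1).PosSemidef ↔ ∀ t ∈ spectrum ℝ A, μ ≤ t := by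
  rw [posSemidef_iff_isHermitian_and_spectrum_nonneg,
    and_iff_right (hA.sub (isHermitian_one.smul (IsSelfAdjoint.all μ))),
    ← Algebra.algebraMap_eq_smul_one, ← spectrum.sub_singleton_eq]
  simp [Set.subset_def]

theorem le_minEig_iff [DecidableEq n] [Nonempty n] (hA : A.IsHermitian) {μ : ℝ} :
    μ ≤ minEig A ↔ (A - μ • 1).PosSemidef := by
  have hne : (spectrum ℝ A).Nonempty := by
    rw [hA.spectrum_real_eq_range_eigenvalues]
    exact Set.range_nonempty _
  rw [minEig_eq_sInf_spectrum, hA.posSemidef_sub_smul_one_iff,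
    le_csInf_iff (A.finite_real_spectrum).bddBelow hne]

theorem minEig_mul_dotProduct_self_le [Nonempty n] (hA : A.IsHermitian) (v : n → ℝ) :
    minEig A * (v ⬝ᵥ v) ≤ v ⬝ᵥ A *ᵥ v := by
  classical
  have h := (hA.le_minEig_iff.mp le_rfl).dotProduct_mulVec_nonneg v
  simp only [star_trivial, sub_mulVec, smul_mulVec, one_mulVec, dotProduct_sub,
    dotProduct_smul, smul_eq_mul] at h
  linarith

theorem two_mul_minEig_le (hA : A.IsHermitian) {x y : n} (hxy : x ≠ y) :
    2 * minEig A ≤ A x x + A x y + A y x + A y y := by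
  classical
  have : Nonempty n := ⟨x⟩
  have hv : (Pi.single x 1 + Pi.single y 1 : n → ℝ) ⬝ᵥ (Pi.single x 1 + Pi.single y 1) = 2 := by
    simp [hxy, hxy.symm, one_add_one_eq_two]
  have h := hA.minEig_mul_dotProduct_self_le (Pi.single x 1 + Pi.single y 1)
  rwa [hv, single_add_single_dotProduct_mulVec_single_add_single, mul_comm] at h

theorem minEig_add_le_minEig_add_diagonal [DecidableEq n] [Nonempty n] (hA : A.IsHermitian)
    {c : ℝ} {d : n → ℝ} (hd : ∀ i, c ≤ d i) : minEig A + c ≤ minEig (A + diagonal d) := by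
  have hAd : (A + diagonal d).IsHermitian := hA.add (isHermitian_diagonal d)
  have hsplit : A + diagonal d - (minEig A + c) • 1
      = (A - minEig A • 1) + diagonal fun i => d i - c := by
    ext i j
    by_cases hij : i = j
    · subst hij
      simp only [add_smul, sub_apply, add_apply, diagonal_apply_eq, smul_apply, one_apply_eq,
        smul_eq_mul, mul_one]
      ring
    · simp [hij]
  rw [hAd.le_minEig_iff, hsplit]
  exact (hA.le_minEig_iff.mp le_rfl).add
    (posSemidef_diagonal_iff.mpr fun i => sub_nonneg.mpr (hd i))

end IsHermitian

end Matrix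


theorem EdgeSignedGraph.M_apply_self {V : Type*} (S : EdgeSignedGraph V) (x : V) : S.M x x = 0 := by
  simp only [M, Matrix.of_apply]
  rw [if_neg (S.pos_irrefl x), if_neg (S.neg_irrefl x)]

namespace HoffmanGraph

open Matrix

variable {V : Type*} (H : HoffmanGraph V)

theorem adj_comm (x y : V) : H.adj x y ↔ H.adj y x := ⟨H.symm, H.symm⟩

theorem commonFat_self (x : V) : H.commonFat x x = H.fatNbrs x := by
  ext f
  simp [commonFat, fatNbrs]

theorem commonFat_subset_fatNbrs_left (x y : V) : H.commonFat x y ⊆ H.fatNbrs x :=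
  fun _ hf => ⟨hf.1, hf.2.1⟩

theorem commonFat_subset_fatNbrs_right (x y : V) : H.commonFat x y ⊆ H.fatNbrs y :=
  fun _ hf => ⟨hf.1, hf.2.2⟩

theorem IsFat.fatNbrs_nonempty {H : HoffmanGraph V} (hfat : H.IsFat) (x : H.Slim) :
    (H.fatNbrs x.1).Nonempty :=
  hfat x.1 x.2

theorem isHermitian_B : H.B.IsHermitian := by
  ext x y
  simp only [conjTranspose_apply, star_trivial, B, of_apply]
  rw [H.commonFat_comm, H.adj_comm]

theorem B_apply_self (x : H.Slim) : H.B x x = -((H.fatNbrs x.1).ncard : ℝ) := by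
  simp [B, H.loopless x.1, commonFat_self]

theorem B_apply_le (x y : H.Slim) : H.B x y ≤ 1 - ((H.commonFat x.1 y.1).ncard : ℝ) := by
  simp only [B, of_apply]
  split_ifs <;> linarith

theorem ncard_commonFat_le_one [Finite V] (h : -3 < H.lamMin) {x y : H.Slim} (hxy : x ≠ y) :
    (H.commonFat x.1 y.1).ncard ≤ 1 := by
  by_contra! h2
  have hx : (H.commonFat x.1 y.1).ncard ≤ (H.fatNbrs x.1).ncard :=
    Set.ncard_le_ncard (H.commonFat_subset_fatNbrs_left _ _)
  have hy : (H.commonFat x.1 y.1).ncard ≤ (H.fatNbrs y.1).ncard :=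
    Set.ncard_le_ncard (H.commonFat_subset_fatNbrs_right _ _)
  have h2' : (2 : ℝ) ≤ (H.commonFat x.1 y.1).ncard := by exact_mod_cast h2
  have hx' : ((H.commonFat x.1 y.1).ncard : ℝ) ≤ (H.fatNbrs x.1).ncard := by exact_mod_cast hx
  have hy' : ((H.commonFat x.1 y.1).ncard : ℝ) ≤ (H.fatNbrs y.1).ncard := by exact_mod_cast hy
  have hB := H.isHermitian_B.two_mul_minEig_le hxy
  rw [H.B_apply_self, H.B_apply_self] at hB
  have hxy' := H.B_apply_le x y
  have hyx' := H.B_apply_le y x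
  rw [H.commonFat_comm] at hyx'
  unfold lamMin at h
  linarith

theorem special_M_apply_of_ne [Finite V] {x y : H.Slim} (hxy : x ≠ y)
    (hc : (H.commonFat x.1 y.1).ncard ≤ 1) : H.special.M x y = H.B x y := by
  classical
  simp only [EdgeSignedGraph.M, B, of_apply]
  rcases (H.commonFat x.1 y.1).eq_empty_or_nonempty with h0 | hne
  · have hneg : ¬ H.special.neg x y := fun hn => hn.2.2.ne_empty h0
    rw [if_neg hneg, h0, Set.ncard_empty, Nat.cast_zero, sub_zero]
    exact if_congr (and_iff_left h0) rfl rfl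
  · have hpos : ¬ H.special.pos x y := fun hp => hne.ne_empty hp.2
    have h1 : (H.commonFat x.1 y.1).ncard = 1 :=
      le_antisymm hc ((Set.ncard_pos (Set.toFinite _)).mpr hne)
    rw [if_neg hpos, h1, Nat.cast_one]
    by_cases hadj : H.adj x.1 y.1
    · rw [if_neg fun hn => hn.2.1 hadj, if_pos hadj, sub_self]
    · rw [if_pos ⟨hxy, hadj, hne⟩, if_neg hadj, zero_sub]

theorem special_M_eq_B_add_diagonal [Finite V] [DecidableEq H.Slim]
    (hc : ∀ x y : H.Slim, x ≠ y → (H.commonFat x.1 y.1).ncard ≤ 1) :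
    H.special.M = H.B + diagonal fun x => ((H.fatNbrs x.1).ncard : ℝ) := by
  ext x y
  by_cases hxy : x = y
  · subst hxy
    simp [EdgeSignedGraph.M_apply_self, B_apply_self]
  · simp [diagonal_apply_ne _ hxy, H.special_M_apply_of_ne hxy (hc x y hxy)]

end HoffmanGraph

/-- If `H` is a fat Hoffman graph (with at least one slim vertex)
with `λ_min(H) > −3`, then `λ_min(S(H)) ≥ λ_min(H) + 1`. -/
theorem statement6 {V : Type*} [Fintype V] (H : HoffmanGraph V)
    (hfat : H.IsFat) (hne : Nonempty H.Slim) (h : H.lamMin > -3) :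
    minEig H.special.M ≥ H.lamMin + 1 := by
  -- not `classical`: it would offer a second `Fintype H.Slim` instance besides that of `lamMin`
  have : DecidableEq H.Slim := Classical.decEq _
  rw [ge_iff_le, HoffmanGraph.lamMin,
    H.special_M_eq_B_add_diagonal fun x y => H.ncard_commonFat_le_one h]
  refine H.isHermitian_B.minEig_add_le_minEig_add_diagonal fun x => ?_
  exact_mod_cast (Set.ncard_pos (Set.toFinite _)).mpr (hfat.fatNbrs_nonempty x)
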